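/- If R_n → 0⁺ and t_n are real numbers with R_n t_n → c for some c ∈ (0,∞), then h_{R_n}(t_n) → 2 J₁(c)/c, where h_R(t) = (R/(π sinh(R/2))) ∫_{−1}^{1} √(1 − (sinh(Rr/2)/sinh(R/2))²) e^{iRrt} dr and J₁ is the Bessel function of the first kind of order 1. -/

import Mathlib

open Complex Real Filter

/-- The Selberg--Harish-Chandra transform of the normalised indicator of a hyperbolic ball. -/
noncomputable def hR (R t : ℝ) : ℂ :=
  ((R / (Real.pi * Real.sinh (R / 2)) : ℝ) : ℂ) *
    ∫ r in (-1 : ℝ)..1,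
      (Real.sqrt (1 - (Real.sinh (R * r / 2) / Real.sinh (R / 2)) ^ 2) : ℂ) *
        Complex.exp (Complex.I * (R * r * t))

/-- The Bessel function of the first kind of order 1, via its power series. -/
noncomputable def besselJ1 (x : ℝ) : ℝ :=
  ∑' m : ℕ, ((-1 : ℝ) ^ m / (Nat.factorial m * Nat.factorial (m + 1))) * (x / 2) ^ (2 * m + 1)

/-!
As `R → 0`, `R / (π sinh (R/2)) → 2/π` and `sinh (R r/2) / sinh (R/2) → r`, so by dominated
convergence (the integrand has modulus at most `1`) `h_{Rₙ}(tₙ)` tends to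
`(2/π) ∫_{-1}^{1} √(1 - r²) e^{icr} dr`. The integrand is even in `r`, so `e^{icr}` may be replaced
by `cos (cr)`; expanding the cosine termwise, the moments
`∫_{-1}^{1} √(1 - r²) r^{2m} dr = π (2m)! / (2 · 4^m m! (m+1)!)` turn the series into `π J₁(c)/c`.
The moments satisfy a two-term recursion because `r^{2m+1} (1 - r²)^{3/2}` vanishes at `±1`.
-/

open MeasureTheory intervalIntegral Topology Nat

lemma tendsto_sinh_mul_div (r : ℝ) :
    Tendsto (fun R => Real.sinh (R * r / 2) / R) (𝓝[≠] 0) (𝓝 (r / 2)) := by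
  have h : HasDerivAt (fun R => Real.sinh (R * r / 2)) (r / 2) 0 := by
    simpa using (((hasDerivAt_id (0 : ℝ)).mul_const r).div_const 2).sinh
  refine (hasDerivAt_iff_tendsto_slope.1 h).congr fun R => ?_
  simp [slope_def_field]

lemma tendsto_sinh_div :
    Tendsto (fun R => Real.sinh (R / 2) / R) (𝓝[≠] 0) (𝓝 (1 / 2)) := by
  simpa using tendsto_sinh_mul_div 1

lemma tendsto_sinh_mul_div_sinh (r : ℝ) :
    Tendsto (fun R => Real.sinh (R * r / 2) / Real.sinh (R / 2)) (𝓝[≠] 0) (𝓝 r) := by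
  have h := (tendsto_sinh_mul_div r).div tendsto_sinh_div (by norm_num)
  rw [div_div_div_cancel_right₀ (by norm_num), div_one] at h
  refine h.congr' ?_
  filter_upwards [self_mem_nhdsWithin] with R hR
  exact div_div_div_cancel_right₀ hR _ _

lemma tendsto_div_pi_mul_sinh :
    Tendsto (fun R => R / (π * Real.sinh (R / 2))) (𝓝[≠] 0) (𝓝 (2 / π)) := by
  have h := (tendsto_sinh_div.const_mul π).inv₀ (by positivity)
  rw [show (π * (1 / 2))⁻¹ = 2 / π by field_simp] at h
  exact h.congr fun R => by rw [mul_div_assoc', inv_div]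

theorem tendsto_hR {ι : Type*} {l : Filter ι} [l.IsCountablyGenerated] {R t : ι → ℝ} {c : ℝ}
    (hR0 : Tendsto R l (𝓝[≠] 0)) (hRt : Tendsto (fun i => R i * t i) l (𝓝 c)) :
    Tendsto (fun i => hR (R i) (t i)) l
      (𝓝 (((2 / π : ℝ) : ℂ) * ∫ r in (-1 : ℝ)..1, (√(1 - r ^ 2) : ℂ) * exp (I * (c * r)))) := by
  refine ((continuous_ofReal.tendsto _).comp (tendsto_div_pi_mul_sinh.comp hR0)).mul ?_
  refine tendsto_integral_filter_of_dominated_convergence (fun _ => 1)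
    (.of_forall fun i => (by fun_prop : Continuous _).aestronglyMeasurable)
    (.of_forall fun i => ae_of_all _ fun r _ => ?_) intervalIntegrable_const
    (ae_of_all _ fun r _ => .mul ?_ ?_)
  · rw [norm_mul, ← ofReal_mul, ← ofReal_mul, norm_exp_I_mul_ofReal, mul_one, norm_real,
      norm_of_nonneg (sqrt_nonneg _)]
    exact sqrt_le_one.2 (sub_le_self _ (sq_nonneg _))
  · exact (continuous_ofReal.tendsto _).comp
      (((by fun_prop : Continuous fun x : ℝ => √(1 - x ^ 2)).tendsto r).comp
        ((tendsto_sinh_mul_div_sinh r).comp hR0))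
  · convert ((by fun_prop : Continuous fun x : ℝ => exp (I * (x * r))).tendsto c).comp hRt
      using 1
    ext i
    simp only [Function.comp_apply, ofReal_mul]
    ring_nf

noncomputable def semicircleMoment (m : ℕ) : ℝ :=
  ∫ r in (-1 : ℝ)..1, √(1 - r ^ 2) * r ^ (2 * m)

lemma hasDerivAt_pow_mul_one_sub_sq_rpow (m : ℕ) {r : ℝ} (hr : r ∈ Set.uIcc (-1 : ℝ) 1) :
    HasDerivAt (fun r : ℝ => r ^ (2 * m + 1) * (1 - r ^ 2) ^ (3 / 2 : ℝ))
      ((2 * m + 1) * (√(1 - r ^ 2) * r ^ (2 * m))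
        - (2 * m + 4) * (√(1 - r ^ 2) * r ^ (2 * (m + 1)))) r := by
  have hr' : 0 ≤ 1 - r ^ 2 := by
    rw [Set.uIcc_of_le (by norm_num)] at hr
    nlinarith [hr.1, hr.2]
  have h := (hasDerivAt_pow (2 * m + 1) r).mul
    (((hasDerivAt_pow 2 r).const_sub 1).rpow_const (p := 3 / 2) (Or.inr (by norm_num)))
  refine h.congr_deriv ?_
  rw [show (3 / 2 : ℝ) - 1 = 1 / 2 by norm_num, show (3 / 2 : ℝ) = 1 + 1 / 2 by norm_num,
    rpow_add' hr' (by norm_num), rpow_one, ← sqrt_eq_rpow]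
  push_cast
  ring

lemma semicircleMoment_succ (m : ℕ) :
    (2 * m + 4) * semicircleMoment (m + 1) = (2 * m + 1) * semicircleMoment m := by
  have h := integral_eq_sub_of_hasDerivAt (fun r => hasDerivAt_pow_mul_one_sub_sq_rpow m)
    (by apply Continuous.intervalIntegrable; fun_prop)
  rw [intervalIntegral.integral_sub (by apply Continuous.intervalIntegrable; fun_prop)
    (by apply Continuous.intervalIntegrable; fun_prop), intervalIntegral.integral_const_mul,
    intervalIntegral.integral_const_mul] at h
  norm_num at h
  simp only [semicircleMoment]
  linarith

lemma semicircleMoment_eq (m : ℕ) :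
    semicircleMoment m = π * (2 * m)! / (2 * 4 ^ m * m ! * (m + 1)!) := by
  induction m with
  | zero => simp [semicircleMoment, integral_sqrt_one_sub_sq]
  | succ m ih =>
    have h := semicircleMoment_succ m
    rw [ih] at h
    rw [Nat.factorial_succ m] at h
    rw [eq_div_iff (by positivity), show 2 * (m + 1) = 2 * m + 1 + 1 by ring,
      Nat.factorial_succ (2 * m + 1), Nat.factorial_succ (2 * m), Nat.factorial_succ (m + 1),
      Nat.factorial_succ m]
    push_cast at h ⊢
    field_simp at h
    linear_combination 2 * (m + 1) * h

lemma hasSum_integral_sqrt_one_sub_sq_mul_cos (c : ℝ) :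
    HasSum (fun m : ℕ => (-1) ^ m * c ^ (2 * m) / (2 * m)! * semicircleMoment m)
      (∫ r in (-1 : ℝ)..1, √(1 - r ^ 2) * Real.cos (c * r)) := by
  have hterm : ∀ m : ℕ, (-1) ^ m * c ^ (2 * m) / (2 * m)! * semicircleMoment m =
      ∫ r in (-1 : ℝ)..1, √(1 - r ^ 2) * ((-1) ^ m * (c * r) ^ (2 * m) / (2 * m)!) := by
    intro m
    rw [semicircleMoment, ← intervalIntegral.integral_const_mul]
    congr 1 with r
    ring
  simp_rw [hterm]
  refine hasSum_integral_of_dominated_convergence (fun m _ => |c| ^ (2 * m) / (2 * m)!)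
    (fun m => (by fun_prop : Continuous _).aestronglyMeasurable)
    (fun m => ae_of_all _ fun r hr => ?_)
    (ae_of_all _ fun r _ => (summable_pow_div_factorial |c|).comp_injective
      (mul_right_injective₀ two_ne_zero))
    intervalIntegrable_const
    (ae_of_all _ fun r _ => (Real.hasSum_cos (c * r)).mul_left _)
  rw [Set.uIoc_of_le (by norm_num)] at hr
  simp only [norm_mul, norm_div, norm_pow, norm_neg, norm_one, one_pow, one_mul, norm_eq_abs,
    Nat.abs_cast, abs_of_nonneg (sqrt_nonneg _)]
  refine (mul_le_of_le_one_left (by positivity)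
    (sqrt_le_one.2 (sub_le_self _ (sq_nonneg _)))).trans ?_
  gcongr
  exact mul_le_of_le_one_right (abs_nonneg c) (abs_le.2 ⟨hr.1.le, hr.2⟩)

lemma mul_integral_sqrt_one_sub_sq_mul_cos (c : ℝ) :
    c * ∫ r in (-1 : ℝ)..1, √(1 - r ^ 2) * Real.cos (c * r) = π * besselJ1 c := by
  have h := (hasSum_integral_sqrt_one_sub_sq_mul_cos c).mul_left c
  rw [besselJ1, ← tsum_mul_left, ← h.tsum_eq]
  congr 1 with m
  rw [semicircleMoment_eq, div_pow, show (4 : ℝ) ^ m = 2 ^ (2 * m) by rw [pow_mul]; norm_num]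
  field_simp
  ring

lemma integral_mul_cexp_of_even {f : ℝ → ℂ} {a : ℝ} (hf : IntervalIntegrable f volume (-a) a)
    (hf_even : ∀ x, f (-x) = f x) (c : ℝ) :
    ∫ x in -a..a, f x * exp (I * (c * x)) = ∫ x in -a..a, f x * Complex.cos (c * x) := by
  have hrefl :
      ∫ x in -a..a, f x * exp (-I * (c * x)) = ∫ x in -a..a, f x * exp (I * (c * x)) := by
    simpa [hf_even] using integral_comp_neg (a := -a) (b := a) (fun x => f x * exp (I * (c * x)))
  calc ∫ x in -a..a, f x * exp (I * (c * x))
      = ((∫ x in -a..a, f x * exp (I * (c * x))) +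
          ∫ x in -a..a, f x * exp (-I * (c * x))) / 2 := by
        rw [hrefl]; ring
    _ = ∫ x in -a..a, f x * Complex.cos (c * x) := by
        rw [← intervalIntegral.integral_add (hf.mul_continuousOn (by fun_prop))
          (hf.mul_continuousOn (by fun_prop)), ← intervalIntegral.integral_div]
        congr 1 with x
        rw [Complex.cos]
        ring_nf

lemma mul_integral_sqrt_one_sub_sq_mul_cexp (c : ℝ) :
    (c : ℂ) * ∫ r in (-1 : ℝ)..1, (√(1 - r ^ 2) : ℂ) * exp (I * (c * r)) =
      ((π * besselJ1 c : ℝ) : ℂ) := by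
  rw [integral_mul_cexp_of_even (by apply Continuous.intervalIntegrable; fun_prop) (by simp),
    ← mul_integral_sqrt_one_sub_sq_mul_cos, ofReal_mul, ← intervalIntegral.integral_ofReal]
  push_cast
  rfl

/-- If `Rₙ → 0⁺` and `Rₙ tₙ → c ∈ (0,∞)`, then `h_{Rₙ}(tₙ) → 2 J₁(c)/c`. -/
theorem hR_tendsto_besselJ1 (Rs ts : ℕ → ℝ) (c : ℝ) (hc : 0 < c)
    (hRpos : ∀ n, 0 < Rs n) (hR0 : Tendsto Rs atTop (nhds 0))
    (hRt : Tendsto (fun n => Rs n * ts n) atTop (nhds c)) :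
    Tendsto (fun n => hR (Rs n) (ts n)) atTop (nhds ((2 * besselJ1 c / c : ℝ) : ℂ)) := by
  have hR0' : Tendsto Rs atTop (𝓝[≠] 0) :=
    tendsto_nhdsWithin_iff.2 ⟨hR0, .of_forall fun n => (hRpos n).ne'⟩
  convert tendsto_hR hR0' hRt using 2
  have hc' : (c : ℂ) ≠ 0 := ofReal_ne_zero.2 hc.ne'
  rw [eq_div_of_mul_eq hc' ((mul_comm _ _).trans (mul_integral_sqrt_one_sub_sq_mul_cexp c))]
  push_cast
  field_simp
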